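/- arXiv:2507.09333 — 2 statements merged into one kernel-verified Lean document; each statement's English description precedes it below -/
import Mathlib

section
/- Let E be a real normed vector space, T>0, γ ∈ (0,1) and α ∈ ((1−γ)/2, 1/2). Then there exists a constant C>0, depending only on α, γ and T, such that for every differentiable function f:(0,T)→E with ∫₀^T ‖f(t)‖² dt < ∞ and ∫₀^T t^{2−γ} ‖f′(t)‖² dt < ∞, one has ∫₀^T h^{2α−2} ( ∫₀^{T−h} ‖f(t+h) − f(t)‖² dt ) dh ≤ C ∫₀^T t^{2−γ} ‖f′(t)‖² dt. -/
/-!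
By the fundamental theorem of calculus and the Cauchy–Schwarz inequality with weight `s ^ (2 - γ)`,
`‖f (t + h) - f t‖ ^ 2 ≤ (∫ s in t..t + h, s ^ (γ - 2)) * A` with `A = ∫₀ᵀ s ^ (2 - γ) ‖f' s‖ ^ 2`.
Integrating this kernel over `t ∈ (0, T - h)` gives at most `h ^ γ / (γ (1 - γ))`, and
`h ^ (2α - 2 + γ)` is integrable on `(0, T)` precisely because `2α + γ > 1`.
-/

open MeasureTheory Set

theorem sq_integral_mul_le_integral_sq_mul_integral_sq {α : Type*} [MeasurableSpace α]
    {μ : Measure α} {u v : α → ℝ} (hu : 0 ≤ᵐ[μ] u) (hv : 0 ≤ᵐ[μ] v)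
    (hu2 : MemLp u 2 μ) (hv2 : MemLp v 2 μ) :
    (∫ x, u x * v x ∂μ) ^ 2 ≤ (∫ x, u x ^ 2 ∂μ) * ∫ x, v x ^ 2 ∂μ := by
  have holder := integral_mul_le_Lp_mul_Lq_of_nonneg Real.HolderConjugate.two_two hu hv
    (by simpa using hu2) (by simpa using hv2)
  simp only [Real.rpow_two, ← Real.sqrt_eq_rpow] at holder
  have huv : 0 ≤ ∫ x, u x * v x ∂μ :=
    integral_nonneg_of_ae (by filter_upwards [hu, hv] with x hux hvx using mul_nonneg hux hvx)
  calc (∫ x, u x * v x ∂μ) ^ 2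
      ≤ (√(∫ x, u x ^ 2 ∂μ) * √(∫ x, v x ^ 2 ∂μ)) ^ 2 := pow_le_pow_left₀ huv holder 2
    _ = (∫ x, u x ^ 2 ∂μ) * ∫ x, v x ^ 2 ∂μ := by
      rw [mul_pow, Real.sq_sqrt (integral_nonneg fun x => sq_nonneg _),
        Real.sq_sqrt (integral_nonneg fun x => sq_nonneg _)]

theorem sq_norm_sub_le_integral_inv_mul_integral_mul_sq_norm_deriv
    {E : Type*} [NormedAddCommGroup E] [NormedSpace ℝ E] {f : ℝ → E} {w : ℝ → ℝ}
    {a b : ℝ} (hab : a ≤ b) (hfc : ContinuousOn f (Icc a b))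
    (hfd : DifferentiableOn ℝ f (Ioo a b)) (hw : ContinuousOn w (Icc a b))
    (hw0 : ∀ s ∈ Icc a b, 0 < w s)
    (hint : IntegrableOn (fun s => w s * ‖deriv f s‖ ^ 2) (Ioc a b)) :
    ‖f b - f a‖ ^ 2 ≤ (∫ s in a..b, (w s)⁻¹) * ∫ s in a..b, w s * ‖deriv f s‖ ^ 2 := by
  set u : ℝ → ℝ := fun s => (√(w s))⁻¹
  -- `‖deriv f‖` need not be measurable when `E` is incomplete, but this square root of `hint`'s
  -- integrand is, and it agrees with `√(w s) * ‖deriv f s‖` on `[a, b]`.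
  set v : ℝ → ℝ := fun s => √(w s * ‖deriv f s‖ ^ 2)
  have huv : ∀ s ∈ Icc a b, u s * v s = ‖deriv f s‖ := fun s hs => by
    simp only [u, v]
    rw [Real.sqrt_mul (hw0 s hs).le, Real.sqrt_sq (norm_nonneg _),
      inv_mul_cancel_left₀ (Real.sqrt_pos.2 (hw0 s hs)).ne']
  have hu_sq : EqOn (fun s => u s ^ 2) (fun s => (w s)⁻¹) (Icc a b) := fun s hs => by
    simp only [u, inv_pow, Real.sq_sqrt (hw0 s hs).le]
  have hv_sq : EqOn (fun s => v s ^ 2) (fun s => w s * ‖deriv f s‖ ^ 2) (Icc a b) :=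
    fun s hs => Real.sq_sqrt (mul_nonneg (hw0 s hs).le (sq_nonneg _))
  have hu : MemLp u 2 (volume.restrict (Ioc a b)) := by
    have hcont : ContinuousOn u (Icc a b) :=
      (hw.sqrt.inv₀ fun s hs => (Real.sqrt_pos.2 (hw0 s hs)).ne')
    refine (memLp_two_iff_integrable_sq
      ((hcont.mono Ioc_subset_Icc_self).aestronglyMeasurable measurableSet_Ioc)).2 ?_
    refine IntegrableOn.mono_set ?_ Ioc_subset_Icc_self
    exact (ContinuousOn.integrableOn_Icc (hcont.pow 2))
  have hv : MemLp v 2 (volume.restrict (Ioc a b)) := by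
    refine (memLp_two_iff_integrable_sq
      (Real.continuous_sqrt.comp_aestronglyMeasurable hint.aestronglyMeasurable)).2 ?_
    exact hint.congr_fun (hv_sq.symm.mono Ioc_subset_Icc_self) measurableSet_Ioc
  calc ‖f b - f a‖ ^ 2 ≤ (∫ s in a..b, u s * v s) ^ 2 := by
        refine pow_le_pow_left₀ (norm_nonneg _) ?_ 2
        refine norm_sub_le_integral_of_norm_deriv_le_of_le hab hfc hfd
          (ae_of_all _ fun s hs => (huv s (Ioo_subset_Icc_self hs)).ge) ?_
        exact (intervalIntegrable_iff_integrableOn_Ioc_of_le hab).2 (hu.integrable_mul hv)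
    _ ≤ (∫ s in a..b, u s ^ 2) * ∫ s in a..b, v s ^ 2 := by
        simp only [intervalIntegral.integral_of_le hab]
        exact sq_integral_mul_le_integral_sq_mul_integral_sq
          (ae_of_all _ fun s => inv_nonneg.2 (Real.sqrt_nonneg _))
          (ae_of_all _ fun s => Real.sqrt_nonneg _) hu hv
    _ = (∫ s in a..b, (w s)⁻¹) * ∫ s in a..b, w s * ‖deriv f s‖ ^ 2 := by
        rw [intervalIntegral.integral_congr (hu_sq.mono (uIcc_of_le hab).subset),
          intervalIntegral.integral_congr (hv_sq.mono (uIcc_of_le hab).subset)]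

theorem intervalIntegrable_rpow_add {r : ℝ} (hr : -1 < r) (h a b : ℝ) :
    IntervalIntegrable (fun t => (t + h) ^ r) volume a b :=
  (IntervalIntegrable.comp_add_right_iff (f := (· ^ r))).2
    (intervalIntegral.intervalIntegrable_rpow' hr)

theorem integral_rpow_sub_rpow_add_le {γ c h : ℝ} (hγ : 0 < γ) (hc : 0 ≤ c) (hh : 0 ≤ h) :
    ∫ t in 0..c, (t ^ (γ - 1) - (t + h) ^ (γ - 1)) ≤ h ^ γ / γ := by
  have hr : -1 < γ - 1 := by linarith
  rw [intervalIntegral.integral_sub (intervalIntegral.intervalIntegrable_rpow' hr)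
      (intervalIntegrable_rpow_add hr h 0 c),
    intervalIntegral.integral_comp_add_right (· ^ (γ - 1)), integral_rpow (Or.inl hr),
    integral_rpow (Or.inl hr), sub_add_cancel, zero_add, Real.zero_rpow hγ.ne', sub_zero,
    div_sub_div_same, div_le_div_iff_of_pos_right hγ]
  have hmono : c ^ γ ≤ (c + h) ^ γ := Real.rpow_le_rpow hc (by linarith) hγ.le
  linarith

section PowerWeight

variable {E : Type*} [NormedAddCommGroup E] [NormedSpace ℝ E] {f : ℝ → E} {T γ : ℝ}

theorem sq_norm_sub_le_rpow_sub_rpow_mul_weighted_integral (hγ : γ ≠ 1)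
    (hf : ∀ x ∈ Ioo 0 T, DifferentiableAt ℝ f x)
    (hint : IntegrableOn (fun x => x ^ (2 - γ) * ‖deriv f x‖ ^ 2) (Ioo 0 T))
    {t h : ℝ} (ht : 0 < t) (hh : 0 ≤ h) (htT : t + h < T) :
    ‖f (t + h) - f t‖ ^ 2 ≤ (t ^ (γ - 1) - (t + h) ^ (γ - 1)) / (1 - γ) *
      ∫ x in Ioo 0 T, x ^ (2 - γ) * ‖deriv f x‖ ^ 2 := by
  have hle : t ≤ t + h := by linarith
  have hsub : Icc t (t + h) ⊆ Ioo 0 T := fun x hx => ⟨ht.trans_le hx.1, hx.2.trans_lt htT⟩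
  have hpos : ∀ x ∈ Icc t (t + h), 0 < x := fun x hx => (hsub hx).1
  have hinv : ∫ x in t..t + h, (x ^ (2 - γ))⁻¹
      = (t ^ (γ - 1) - (t + h) ^ (γ - 1)) / (1 - γ) := by
    rw [intervalIntegral.integral_congr (g := (· ^ (γ - 2))) fun x hx => by
        rw [← Real.rpow_neg (hpos x ((uIcc_of_le hle) ▸ hx)).le, neg_sub],
      integral_rpow (Or.inr ⟨fun h1 => hγ (by linarith),
        fun h0 => (hpos 0 ((uIcc_of_le hle) ▸ h0)).false⟩),
      show γ - 2 + 1 = γ - 1 by ring, ← neg_div_neg_eq, neg_sub, neg_sub]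
  have hweight : ∫ x in t..t + h, x ^ (2 - γ) * ‖deriv f x‖ ^ 2
      ≤ ∫ x in Ioo 0 T, x ^ (2 - γ) * ‖deriv f x‖ ^ 2 := by
    rw [intervalIntegral.integral_of_le hle]
    refine setIntegral_mono_set hint ?_ (Ioc_subset_Icc_self.trans hsub).eventuallyLE
    exact (ae_restrict_iff' measurableSet_Ioo).2 (ae_of_all _ fun x hx =>
      mul_nonneg (Real.rpow_nonneg hx.1.le _) (sq_nonneg _))
  calc ‖f (t + h) - f t‖ ^ 2
      ≤ (∫ x in t..t + h, (x ^ (2 - γ))⁻¹) *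
          ∫ x in t..t + h, x ^ (2 - γ) * ‖deriv f x‖ ^ 2 :=
        sq_norm_sub_le_integral_inv_mul_integral_mul_sq_norm_deriv hle
          (fun x hx => (hf x (hsub hx)).continuousAt.continuousWithinAt)
          (fun x hx => (hf x (hsub (Ioo_subset_Icc_self hx))).differentiableWithinAt)
          (fun x hx =>
            (Real.continuousAt_rpow_const x _ (Or.inl (hpos x hx).ne')).continuousWithinAt)
          (fun x hx => Real.rpow_pos_of_pos (hpos x hx) _)
          (hint.mono_set (Ioc_subset_Icc_self.trans hsub))
    _ ≤ (∫ x in t..t + h, (x ^ (2 - γ))⁻¹) *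
          ∫ x in Ioo 0 T, x ^ (2 - γ) * ‖deriv f x‖ ^ 2 :=
        mul_le_mul_of_nonneg_left hweight (intervalIntegral.integral_nonneg hle fun x hx =>
          (inv_pos.2 (Real.rpow_pos_of_pos (hpos x hx) _)).le)
    _ = _ := by rw [hinv]

theorem integral_sq_norm_sub_le_rpow_mul_weighted_integral (hγ : γ ∈ Ioo 0 1)
    (hf : ∀ x ∈ Ioo 0 T, DifferentiableAt ℝ f x)
    (hint : IntegrableOn (fun x => x ^ (2 - γ) * ‖deriv f x‖ ^ 2) (Ioo 0 T))
    {h : ℝ} (hh : 0 ≤ h) (hhT : h ≤ T) :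
    ∫ t in Ioo 0 (T - h), ‖f (t + h) - f t‖ ^ 2 ≤
      h ^ γ / (γ * (1 - γ)) * ∫ x in Ioo 0 T, x ^ (2 - γ) * ‖deriv f x‖ ^ 2 := by
  obtain ⟨hγ0, hγ1⟩ := hγ
  set A := ∫ x in Ioo 0 T, x ^ (2 - γ) * ‖deriv f x‖ ^ 2
  have hTh : 0 ≤ T - h := by linarith
  have hr : -1 < γ - 1 := by linarith
  have hkernel :
      IntervalIntegrable (fun t => t ^ (γ - 1) - (t + h) ^ (γ - 1)) volume 0 (T - h) :=
    (intervalIntegral.intervalIntegrable_rpow' hr).sub (intervalIntegrable_rpow_add hr h _ _)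
  have hA : 0 ≤ A := setIntegral_nonneg measurableSet_Ioo fun x hx =>
    mul_nonneg (Real.rpow_nonneg hx.1.le _) (sq_nonneg _)
  calc ∫ t in Ioo 0 (T - h), ‖f (t + h) - f t‖ ^ 2
      ≤ ∫ t in Ioo 0 (T - h), (t ^ (γ - 1) - (t + h) ^ (γ - 1)) / (1 - γ) * A := by
        refine integral_mono_of_nonneg (ae_of_all _ fun t => sq_nonneg _) ?_ ?_
        · exact (((intervalIntegrable_iff_integrableOn_Ioo_of_le hTh).1 hkernel).div_const
            _).mul_const _
        · refine (ae_restrict_iff' measurableSet_Ioo).2 (ae_of_all _ fun t ht => ?_)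
          exact sq_norm_sub_le_rpow_sub_rpow_mul_weighted_integral hγ1.ne hf hint ht.1 hh
            (by linarith [ht.2])
    _ = (∫ t in 0..(T - h), (t ^ (γ - 1) - (t + h) ^ (γ - 1))) / (1 - γ) * A := by
        rw [integral_Ioc_eq_integral_Ioo.symm, ← intervalIntegral.integral_of_le hTh,
          intervalIntegral.integral_mul_const, intervalIntegral.integral_div]
    _ ≤ h ^ γ / γ / (1 - γ) * A := by
        gcongr
        exact integral_rpow_sub_rpow_add_le hγ0 hTh hh
    _ = h ^ γ / (γ * (1 - γ)) * A := by rw [div_div]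

end PowerWeight

/-- quantitative fractional Sobolev-in-time bound.  If
`f ∈ L²(0,T;E)` is differentiable on `(0,T)` with `t^{1-γ/2} f' ∈ L²(0,T;E)`,
then the `H^{1/2-α}(0,T;E)` Gagliardo seminorm of `f` is controlled by the
weighted norm of `f'`, with a constant depending only on `α`, `γ` and `T`. -/
theorem time_weighted_fractional_sobolev_bound
    {E : Type*} [NormedAddCommGroup E] [NormedSpace ℝ E]
    (T γ α : ℝ) (hT : 0 < T) (hγ : γ ∈ Set.Ioo (0:ℝ) 1)
    (hα : α ∈ Set.Ioo ((1 - γ) / 2) (1 / 2)) :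
    ∃ C > 0, ∀ f : ℝ → E,
      (∀ t ∈ Set.Ioo (0:ℝ) T, DifferentiableAt ℝ f t) →
      IntegrableOn (fun t => ‖f t‖ ^ 2) (Set.Ioo 0 T) →
      IntegrableOn (fun t => t ^ (2 - γ) * ‖deriv f t‖ ^ 2) (Set.Ioo 0 T) →
      (∫ h in Set.Ioo (0:ℝ) T,
          h ^ (2 * α - 2) * ∫ t in Set.Ioo (0:ℝ) (T - h), ‖f (t + h) - f t‖ ^ 2)
        ≤ C * ∫ t in Set.Ioo (0:ℝ) T, t ^ (2 - γ) * ‖deriv f t‖ ^ 2 := by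
  obtain ⟨hγ0, hγ1⟩ := hγ
  have hβ : 0 < 2 * α + γ - 1 := by linarith [hα.1]
  refine ⟨T ^ (2 * α + γ - 1) / (2 * α + γ - 1) / (γ * (1 - γ)),
    div_pos (div_pos (Real.rpow_pos_of_pos hT _) hβ) (mul_pos hγ0 (by linarith)),
    fun f hf _ hint => ?_⟩
  set A := ∫ x in Ioo 0 T, x ^ (2 - γ) * ‖deriv f x‖ ^ 2
  have hbound : ∀ h ∈ Ioo 0 T,
      h ^ (2 * α - 2) * ∫ t in Ioo 0 (T - h), ‖f (t + h) - f t‖ ^ 2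
        ≤ h ^ (2 * α + γ - 2) * (A / (γ * (1 - γ))) := fun h hh => by
    calc h ^ (2 * α - 2) * ∫ t in Ioo 0 (T - h), ‖f (t + h) - f t‖ ^ 2
        ≤ h ^ (2 * α - 2) * (h ^ γ / (γ * (1 - γ)) * A) :=
          mul_le_mul_of_nonneg_left (integral_sq_norm_sub_le_rpow_mul_weighted_integral
            ⟨hγ0, hγ1⟩ hf hint hh.1.le hh.2.le) (Real.rpow_nonneg hh.1.le _)
      _ = h ^ (2 * α + γ - 2) * (A / (γ * (1 - γ))) := by
          rw [show 2 * α + γ - 2 = 2 * α - 2 + γ by ring, Real.rpow_add hh.1]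
          ring
  calc _ ≤ ∫ h in Ioo 0 T, h ^ (2 * α + γ - 2) * (A / (γ * (1 - γ))) := by
        refine integral_mono_of_nonneg ?_ ?_
          ((ae_restrict_iff' measurableSet_Ioo).2 (ae_of_all _ hbound))
        · exact (ae_restrict_iff' measurableSet_Ioo).2 (ae_of_all _ fun h hh =>
            mul_nonneg (Real.rpow_nonneg hh.1.le _) (integral_nonneg fun t => sq_nonneg _))
        · exact ((intervalIntegrable_iff_integrableOn_Ioo_of_le hT.le).1
            ((intervalIntegral.intervalIntegrable_rpow' (by linarith)).mul_const _))
    _ = _ := by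
        rw [integral_Ioc_eq_integral_Ioo.symm, ← intervalIntegral.integral_of_le hT.le,
          intervalIntegral.integral_mul_const, integral_rpow (Or.inl (by linarith)),
          show 2 * α + γ - 2 + 1 = 2 * α + γ - 1 by ring, Real.zero_rpow hβ.ne']
        ring
end

section
/- Let a:𝕋²→[0,∞) be an integrable function which is not almost everywhere zero, and set M = (1/|𝕋²|) ∫_{𝕋²} a(x) dx. Then for every continuously differentiable function f:𝕋²→ℝ with a ∈ L²(𝕋²), one has ‖f‖_{L²(𝕋²)} ≤ (1/M) |∫_{𝕋²} a(x) f(x) dx| + (1 + ‖M − a‖_{L²(𝕋²)}/M) ‖∇f‖_{L²(𝕋²)}. -/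
open MeasureTheory

/-- Partial derivative `∂ᵢ f` of a scalar function on `ℝ²`. -/
noncomputable def pd (f : (Fin 2 → ℝ) → ℝ) (i : Fin 2) (x : Fin 2 → ℝ) : ℝ :=
  fderiv ℝ f x (Pi.single i 1)

/-- A function on `ℝ²` is `ℤ²`-periodic, i.e. descends to the torus `𝕋² = (ℝ/ℤ)²`. -/
def Per (f : (Fin 2 → ℝ) → ℝ) : Prop :=
  ∀ (x : Fin 2 → ℝ) (k : Fin 2 → ℤ), f (x + fun i => (k i : ℝ)) = f x

/-- The fundamental domain of the torus `𝕋² = (ℝ/ℤ)²`. -/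
def T2 : Set (Fin 2 → ℝ) := Set.Icc 0 1

open Set ProbabilityTheory
open scoped ENNReal

/-!
Over the unit square, a probability space, write `m` and `M` for the means of `f` and `a`. Then
`‖f‖ ≤ √Var f + |m|`, and `M m = ∫ a f - cov(a, f)` with `|cov(a, f)| ≤ ‖M - a‖ √Var f` by
Cauchy–Schwarz, so everything reduces to the Poincaré inequality `Var f ≤ ‖∇f‖²`. In one variable
the oscillation of `u` on `[0, 1]` is at most `∫ |u'|`, whence `Var u ≤ (∫ |u'|)² ≤ ∫ u'²`. In two
variables the law of total variance splits `Var f` into the mean variance of the slices in the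
second coordinate and the variance of the slice means; the slice means are differentiable with
derivative the slice means of `∂₁f`, so both parts are controlled by the one-variable inequality.
-/

section SecondMoments

variable {α : Type*} [MeasurableSpace α] {μ : Measure α}

lemma abs_integral_mul_le_sqrt_mul_sqrt {u v : α → ℝ} (hu : MemLp u 2 μ) (hv : MemLp v 2 μ) :
    |∫ x, u x * v x ∂μ| ≤ √(∫ x, u x ^ 2 ∂μ) * √(∫ x, v x ^ 2 ∂μ) := by
  have holder := integral_mul_le_Lp_mul_Lq_of_nonneg Real.HolderConjugate.two_two
    (f := fun x => |u x|) (g := fun x => |v x|)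
    (ae_of_all μ fun x => abs_nonneg (u x)) (ae_of_all μ fun x => abs_nonneg (v x))
    (by norm_num; exact hu.abs) (by norm_num; exact hv.abs)
  simp only [← abs_mul, Real.rpow_two, sq_abs, ← Real.sqrt_eq_rpow] at holder
  exact abs_integral_le_integral_abs.trans holder

lemma abs_covariance_le_sqrt_variance_mul [IsFiniteMeasure μ] {X Y : α → ℝ}
    (hX : MemLp X 2 μ) (hY : MemLp Y 2 μ) :
    |cov[X, Y; μ]| ≤ √Var[X; μ] * √Var[Y; μ] := by
  rw [variance_eq_integral hX.aemeasurable, variance_eq_integral hY.aemeasurable]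
  exact abs_integral_mul_le_sqrt_mul_sqrt (hX.sub (memLp_const _)) (hY.sub (memLp_const _))

lemma Continuous.memLp_of_ae_mem_isCompact [TopologicalSpace α] [OpensMeasurableSpace α]
    [IsFiniteMeasure μ] {φ : α → ℝ} (hφ : Continuous φ) {K : Set α} (hK : IsCompact K)
    (hμK : ∀ᵐ x ∂μ, x ∈ K) (p : ℝ≥0∞) : MemLp φ p μ := by
  obtain ⟨C, hC⟩ := hK.exists_bound_of_continuousOn hφ.continuousOn
  exact MemLp.of_bound hφ.aestronglyMeasurable C (hμK.mono hC)

variable [IsProbabilityMeasure μ]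

lemma sq_integral_le_integral_sq {X : α → ℝ} (hX : MemLp X 2 μ) :
    (∫ x, X x ∂μ) ^ 2 ≤ ∫ x, X x ^ 2 ∂μ := by
  have := variance_nonneg X μ
  rw [variance_eq_sub hX] at this
  simpa using this

lemma sqrt_integral_sq_le_sqrt_variance_add_abs {X : α → ℝ} (hX : MemLp X 2 μ) :
    √(∫ x, X x ^ 2 ∂μ) ≤ √Var[X; μ] + |∫ x, X x ∂μ| := by
  have hsplit : ∫ x, X x ^ 2 ∂μ = Var[X; μ] + (∫ x, X x ∂μ) ^ 2 := by
    rw [variance_eq_sub hX]; simp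
  have hV := Real.sq_sqrt (variance_nonneg X μ)
  rw [hsplit, Real.sqrt_le_iff]
  constructor
  · positivity
  · nlinarith [sq_abs (∫ x, X x ∂μ), abs_nonneg (∫ x, X x ∂μ), Real.sqrt_nonneg Var[X; μ]]

lemma integral_mul_abs_integral_le {a f : α → ℝ} (ha : MemLp a 2 μ) (hf : MemLp f 2 μ) :
    (∫ x, a x ∂μ) * |∫ x, f x ∂μ|
      ≤ |∫ x, a x * f x ∂μ| + √Var[a; μ] * √Var[f; μ] := by
  have hcov : (∫ x, a x ∂μ) * (∫ x, f x ∂μ) = ∫ x, a x * f x ∂μ - cov[a, f; μ] := by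
    rw [covariance_eq_sub ha hf]; simp
  calc (∫ x, a x ∂μ) * |∫ x, f x ∂μ| ≤ |(∫ x, a x ∂μ) * ∫ x, f x ∂μ| := by
        rw [abs_mul]; exact mul_le_mul_of_nonneg_right (le_abs_self _) (abs_nonneg _)
    _ ≤ |∫ x, a x * f x ∂μ| + |cov[a, f; μ]| := by rw [hcov]; exact abs_sub _ _
    _ ≤ _ := by gcongr; exact abs_covariance_le_sqrt_variance_mul ha hf

lemma sqrt_integral_sq_le_of_integral_weight_pos {a f : α → ℝ} (ha : MemLp a 2 μ)
    (hf : MemLp f 2 μ) (hM : 0 < ∫ x, a x ∂μ) :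
    √(∫ x, f x ^ 2 ∂μ)
      ≤ 1 / (∫ x, a x ∂μ) * |∫ x, a x * f x ∂μ|
        + (1 + √Var[a; μ] / ∫ x, a x ∂μ) * √Var[f; μ] := by
  have hmean : |∫ x, f x ∂μ|
      ≤ (|∫ x, a x * f x ∂μ| + √Var[a; μ] * √Var[f; μ]) / ∫ x, a x ∂μ := by
    rw [le_div_iff₀ hM, mul_comm]
    exact integral_mul_abs_integral_le ha hf
  calc √(∫ x, f x ^ 2 ∂μ) ≤ √Var[f; μ] + |∫ x, f x ∂μ| :=
        sqrt_integral_sq_le_sqrt_variance_add_abs hf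
    _ ≤ √Var[f; μ] + (|∫ x, a x * f x ∂μ| + √Var[a; μ] * √Var[f; μ]) / ∫ x, a x ∂μ := by
        gcongr
    _ = _ := by field_simp; ring

variable {β : Type*} [MeasurableSpace β] {ν : Measure β} [IsProbabilityMeasure ν]

theorem variance_prod_eq_integral_variance_add_variance_integral {F : α × β → ℝ}
    (hF : MemLp F 2 (μ.prod ν)) :
    Var[F; μ.prod ν]
      = ∫ x, Var[fun y => F (x, y); ν] ∂μ + Var[fun x => ∫ y, F (x, y) ∂ν; μ] := by
  have hF1 : Integrable F (μ.prod ν) := hF.integrable one_le_two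
  have hF2 : Integrable (fun p => F p ^ 2) (μ.prod ν) := hF.integrable_sq
  have hslice : ∀ᵐ x ∂μ, MemLp (fun y => F (x, y)) 2 ν := by
    filter_upwards [hF.aestronglyMeasurable.prodMk_left, hF2.prod_right_ae] with x hxm hxi
    exact (memLp_two_iff_integrable_sq hxm).2 hxi
  have hmeanL2 : MemLp (fun x => ∫ y, F (x, y) ∂ν) 2 μ := by
    have hm := hF.aestronglyMeasurable.integral_prod_right'
    refine (memLp_two_iff_integrable_sq hm).2 (hF2.integral_prod_left.mono' (hm.pow 2) ?_)
    filter_upwards [hslice] with x hx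
    rw [Real.norm_of_nonneg (sq_nonneg _)]
    exact sq_integral_le_integral_sq hx
  have hvar_slice : ∀ᵐ x ∂μ, Var[fun y => F (x, y); ν]
      = ∫ y, F (x, y) ^ 2 ∂ν - (∫ y, F (x, y) ∂ν) ^ 2 := by
    filter_upwards [hslice] with x hx
    rw [variance_eq_sub hx]; rfl
  rw [integral_congr_ae hvar_slice, integral_sub hF2.integral_prod_left hmeanL2.integrable_sq,
    variance_eq_sub hF, variance_eq_sub hmeanL2]
  simp only [Pi.pow_apply]
  rw [integral_prod _ hF2, integral_prod _ hF1]
  ring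

end SecondMoments

lemma abs_sub_le_setIntegral_abs_deriv {u u' : ℝ → ℝ} {a b x : ℝ}
    (hu : ∀ t, HasDerivAt u (u' t) t) (hu' : IntegrableOn u' (Icc a b)) (hx : x ∈ Icc a b) :
    |u x - u a| ≤ ∫ t in Icc a b, |u' t| := by
  have hsub : Icc a x ⊆ Icc a b := Icc_subset_Icc_right hx.2
  rw [← intervalIntegral.integral_eq_sub_of_hasDerivAt (fun t _ => hu t)
    ((hu'.mono_set (by rwa [uIcc_of_le hx.1])).intervalIntegrable)]
  calc |∫ t in a..x, u' t| ≤ ∫ t in a..x, |u' t| :=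
        intervalIntegral.abs_integral_le_integral_abs hx.1
    _ = ∫ t in Ioc a x, |u' t| := intervalIntegral.integral_of_le hx.1
    _ ≤ ∫ t in Icc a b, |u' t| :=
        setIntegral_mono_set hu'.abs (ae_of_all _ fun t => abs_nonneg _)
          (Ioc_subset_Icc_self.trans hsub).eventuallyLE

lemma Differentiable.hasDerivAt_comp_prodMk_left {F : ℝ × ℝ → ℝ} (hF : Differentiable ℝ F)
    (x y : ℝ) : HasDerivAt (fun x => F (x, y)) (fderiv ℝ F (x, y) (1, 0)) x :=
  (hF (x, y)).hasFDerivAt.comp_hasDerivAt x ((hasDerivAt_id x).prodMk (hasDerivAt_const x y))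

lemma Differentiable.hasDerivAt_comp_prodMk_right {F : ℝ × ℝ → ℝ} (hF : Differentiable ℝ F)
    (x y : ℝ) : HasDerivAt (fun y => F (x, y)) (fderiv ℝ F (x, y) (0, 1)) y :=
  (hF (x, y)).hasFDerivAt.comp_hasDerivAt y ((hasDerivAt_const y x).prodMk (hasDerivAt_id y))

lemma hasDerivAt_setIntegral_comp_prodMk_left {F : ℝ × ℝ → ℝ} (hF : ContDiff ℝ 1 F)
    {K : Set ℝ} (hK : IsCompact K) (x₀ : ℝ) :
    HasDerivAt (fun x => ∫ y in K, F (x, y)) (∫ y in K, fderiv ℝ F (x₀, y) (1, 0)) x₀ := by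
  have hFx : Continuous fun p : ℝ × ℝ => fderiv ℝ F p (1, 0) :=
    (hF.continuous_fderiv one_ne_zero).clm_apply continuous_const
  obtain ⟨C, hC⟩ := ((isCompact_closedBall x₀ 1).prod hK).exists_bound_of_continuousOn
    hFx.continuousOn
  have hslice {G : ℝ × ℝ → ℝ} (hG : Continuous G) (x : ℝ) :
      Continuous fun y => G (x, y) := hG.comp (continuous_const.prodMk continuous_id)
  refine (hasDerivAt_integral_of_dominated_loc_of_deriv_le (bound := fun _ => C)
    (Metric.closedBall_mem_nhds x₀ one_pos)
    (Filter.Eventually.of_forall fun x => (hslice hF.continuous x).aestronglyMeasurable)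
    ((hslice hF.continuous x₀).continuousOn.integrableOn_compact hK)
    (hslice hFx x₀).aestronglyMeasurable ?_ (integrableOn_const hK.measure_ne_top)
    (ae_of_all _ fun y x _ => (hF.differentiable one_ne_zero).hasDerivAt_comp_prodMk_left x y)).2
  filter_upwards [ae_restrict_mem hK.measurableSet] with y hy x hx
  exact hC (x, y) ⟨hx, hy⟩

lemma Continuous.memLp_restrict_Icc {φ : ℝ → ℝ} (hφ : Continuous φ) (a b : ℝ) (p : ℝ≥0∞) :
    MemLp φ p (volume.restrict (Icc a b)) :=
  hφ.memLp_of_ae_mem_isCompact isCompact_Icc (ae_restrict_mem measurableSet_Icc) p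

section UnitSquare

local notation "μ₁" => volume.restrict (Icc (0 : ℝ) 1)

local notation "μ₂" => Measure.prod μ₁ μ₁

instance : IsProbabilityMeasure μ₁ := ⟨by simp⟩

lemma ae_mem_Icc_prod_Icc :
    ∀ᵐ p ∂μ₂, p ∈ Icc (0 : ℝ) 1 ×ˢ Icc (0 : ℝ) 1 := by
  rw [Measure.prod_restrict]
  exact ae_restrict_mem (measurableSet_Icc.prod measurableSet_Icc)

theorem variance_unitInterval_le_integral_sq_deriv {u u' : ℝ → ℝ}
    (hu : ∀ x, HasDerivAt u (u' x) x) (hu' : Continuous u') : Var[u; μ₁] ≤ ∫ x, u' x ^ 2 ∂μ₁ := by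
  have hu'L2 : MemLp u' 2 μ₁ := hu'.memLp_restrict_Icc 0 1 2
  set D := ∫ x, |u' x| ∂μ₁
  have hbound : ∀ᵐ x ∂μ₁, u x ∈ Icc (u 0 - D) (u 0 + D) := by
    filter_upwards [ae_restrict_mem measurableSet_Icc] with x hx
    have := abs_le.1 (abs_sub_le_setIntegral_abs_deriv hu (hu'L2.integrable one_le_two) hx)
    exact ⟨by linarith, by linarith⟩
  have hcont : Continuous u := continuous_iff_continuousAt.2 fun x => (hu x).continuousAt
  calc Var[u; μ₁] ≤ ((u 0 + D - (u 0 - D)) / 2) ^ 2 :=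
        variance_le_sq_of_bounded hbound hcont.aemeasurable
    _ = (∫ x, |u' x| ∂μ₁) ^ 2 := by ring
    _ ≤ ∫ x, |u' x| ^ 2 ∂μ₁ := sq_integral_le_integral_sq hu'L2.abs
    _ = ∫ x, u' x ^ 2 ∂μ₁ := by simp_rw [sq_abs]

theorem variance_unitSquare_le_integral_sq_fderiv {F : ℝ × ℝ → ℝ} (hF : ContDiff ℝ 1 F) :
    Var[F; μ₂] ≤ ∫ p, (fderiv ℝ F p (1, 0) ^ 2 + fderiv ℝ F p (0, 1) ^ 2) ∂μ₂ := by
  have hdiff := hF.differentiable one_ne_zero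
  have hpartial (v : ℝ × ℝ) : Continuous fun p => fderiv ℝ F p v :=
    (hF.continuous_fderiv one_ne_zero).clm_apply continuous_const
  have hL2 {G : ℝ × ℝ → ℝ} (hG : Continuous G) : MemLp G 2 μ₂ :=
    hG.memLp_of_ae_mem_isCompact (isCompact_Icc.prod isCompact_Icc) ae_mem_Icc_prod_Icc 2
  have hslices : ∫ x, Var[fun y => F (x, y); μ₁] ∂μ₁ ≤ ∫ p, fderiv ℝ F p (0, 1) ^ 2 ∂μ₂ := by
    rw [integral_prod _ (hL2 (hpartial _)).integrable_sq]
    refine integral_mono_of_nonneg (ae_of_all _ fun x => variance_nonneg _ _)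
      (hL2 (hpartial _)).integrable_sq.integral_prod_left (ae_of_all _ fun x => ?_)
    exact variance_unitInterval_le_integral_sq_deriv (hdiff.hasDerivAt_comp_prodMk_right x)
      ((hpartial _).comp (continuous_const.prodMk continuous_id))
  have hmeans : Var[fun x => ∫ y, F (x, y) ∂μ₁; μ₁] ≤ ∫ p, fderiv ℝ F p (1, 0) ^ 2 ∂μ₂ := by
    set G := fun x => ∫ y, fderiv ℝ F (x, y) (1, 0) ∂μ₁
    have hG : Continuous G :=
      continuous_parametric_integral_of_continuous (hpartial _) isCompact_Icc
    calc Var[fun x => ∫ y, F (x, y) ∂μ₁; μ₁] ≤ ∫ x, G x ^ 2 ∂μ₁ :=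
          variance_unitInterval_le_integral_sq_deriv
            (hasDerivAt_setIntegral_comp_prodMk_left hF isCompact_Icc) hG
      _ ≤ ∫ x, ∫ y, fderiv ℝ F (x, y) (1, 0) ^ 2 ∂μ₁ ∂μ₁ := by
          refine integral_mono (hG.memLp_restrict_Icc 0 1 2).integrable_sq
            (hL2 (hpartial _)).integrable_sq.integral_prod_left fun x => ?_
          exact sq_integral_le_integral_sq
            (((hpartial _).comp (continuous_const.prodMk continuous_id)).memLp_restrict_Icc 0 1 2)
      _ = ∫ p, fderiv ℝ F p (1, 0) ^ 2 ∂μ₂ :=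
          (integral_prod _ (hL2 (hpartial _)).integrable_sq).symm
  rw [variance_prod_eq_integral_variance_add_variance_integral (hL2 hF.continuous),
    integral_add (hL2 (hpartial _)).integrable_sq (hL2 (hpartial _)).integrable_sq]
  linarith

instance : IsProbabilityMeasure (volume.restrict T2) := ⟨by simp [T2, Real.volume_Icc_pi]⟩

lemma measurePreserving_finTwoArrow_restrict_T2 :
    MeasurePreserving MeasurableEquiv.finTwoArrow (volume.restrict T2) μ₂ := by
  have hpre : MeasurableEquiv.finTwoArrow ⁻¹' (Icc (0 : ℝ) 1 ×ˢ Icc (0 : ℝ) 1) = T2 := by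
    ext x
    simp [T2, Pi.le_def, Fin.forall_fin_two]
  rw [Measure.prod_restrict, ← Measure.volume_eq_prod, ← hpre]
  exact (volume_preserving_finTwoArrow ℝ).restrict_preimage_emb
    MeasurableEquiv.finTwoArrow.measurableEmbedding _

theorem variance_T2_le_integral_sum_sq_pd {f : (Fin 2 → ℝ) → ℝ} (hf : ContDiff ℝ 1 f) :
    Var[f; volume.restrict T2] ≤ ∫ x in T2, ∑ i, pd f i x ^ 2 := by
  set e := ContinuousLinearEquiv.finTwoArrow ℝ ℝ
  have hpd (x : Fin 2 → ℝ) (i : Fin 2) :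
      pd f i x = fderiv ℝ (f ∘ e.symm) (e x) (e (Pi.single i 1)) := by
    rw [pd, ContinuousLinearEquiv.comp_right_fderiv]
    simp
  have hmp := measurePreserving_finTwoArrow_restrict_T2
  calc Var[f; volume.restrict T2]
      = Var[fun x => (f ∘ e.symm) (MeasurableEquiv.finTwoArrow x); volume.restrict T2] := by
        congr 1; ext x; exact congrArg f (e.symm_apply_apply x).symm
    _ = Var[f ∘ e.symm; μ₂] :=
        hmp.variance_fun_comp (hf.continuous.comp e.symm.continuous).aemeasurable
    _ ≤ ∫ p, (fderiv ℝ (f ∘ e.symm) p (1, 0) ^ 2 + fderiv ℝ (f ∘ e.symm) p (0, 1) ^ 2) ∂μ₂ :=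
        variance_unitSquare_le_integral_sq_fderiv (hf.comp e.symm.contDiff)
    _ = ∫ x in T2, ∑ i, pd f i x ^ 2 := by
        rw [← hmp.integral_comp']
        congr 1; ext x
        simp [hpd, Fin.sum_univ_two, e]

end UnitSquare

theorem weighted_poincare_on_torus_general
    (a f : (Fin 2 → ℝ) → ℝ) (M : ℝ)
    (hanonneg : ∀ x, 0 ≤ a x)
    (haint : IntegrableOn a T2)
    (haL2 : IntegrableOn (fun x => (a x) ^ 2) T2)
    (hane : ¬ (∀ᵐ x ∂(volume.restrict T2), a x = 0))
    (hf : ContDiff ℝ 1 f)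
    (hM : M = (∫ x in T2, a x) / (volume T2).toReal) :
    Real.sqrt (∫ x in T2, (f x) ^ 2)
      ≤ (1 / M) * |∫ x in T2, a x * f x|
        + (1 + Real.sqrt (∫ x in T2, (M - a x) ^ 2) / M)
          * Real.sqrt (∫ x in T2, ∑ i, (pd f i x) ^ 2) := by
  have hM' : M = ∫ x in T2, a x := by simp [hM, T2, Real.volume_Icc_pi]
  have haL2' : MemLp a 2 (volume.restrict T2) :=
    (memLp_two_iff_integrable_sq haint.aestronglyMeasurable).2 haL2
  have hfL2 : MemLp f 2 (volume.restrict T2) :=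
    hf.continuous.memLp_of_ae_mem_isCompact (K := T2) isCompact_Icc
      (ae_restrict_mem measurableSet_Icc) 2
  have hMpos : 0 < M := hM' ▸ (integral_nonneg hanonneg).lt_of_ne
    fun h => hane ((integral_eq_zero_iff_of_nonneg hanonneg haint).1 h.symm)
  have hVa : Var[a; volume.restrict T2] = ∫ x in T2, (M - a x) ^ 2 := by
    rw [variance_eq_integral haL2'.aemeasurable, ← hM']
    simp_rw [sub_sq_comm]
  calc √(∫ x in T2, f x ^ 2)
      ≤ 1 / M * |∫ x in T2, a x * f x| + (1 + √Var[a; volume.restrict T2] / M)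
          * √Var[f; volume.restrict T2] :=
        hM' ▸ sqrt_integral_sq_le_of_integral_weight_pos haL2' hfL2 (hM' ▸ hMpos)
    _ ≤ _ := by
        rw [hVa]
        gcongr
        exact variance_T2_le_integral_sum_sq_pd hf

/-- Poincaré-type inequality on the torus with a nonnegative
weight `a` that is not almost everywhere zero, where
`M = (1/|𝕋²|) ∫_{𝕋²} a dx`. -/
theorem weighted_poincare_on_torus
    (a f : (Fin 2 → ℝ) → ℝ) (M : ℝ)
    (haper : Per a) (hfper : Per f)
    (hameas : Measurable a) (hanonneg : ∀ x, 0 ≤ a x)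
    (haint : IntegrableOn a T2)
    (haL2 : IntegrableOn (fun x => (a x) ^ 2) T2)
    (hane : ¬ (∀ᵐ x ∂(volume.restrict T2), a x = 0))
    (hf : ContDiff ℝ 1 f)
    (hM : M = (∫ x in T2, a x) / (volume T2).toReal) :
    Real.sqrt (∫ x in T2, (f x) ^ 2)
      ≤ (1 / M) * |∫ x in T2, a x * f x|
        + (1 + Real.sqrt (∫ x in T2, (M - a x) ^ 2) / M)
          * Real.sqrt (∫ x in T2, ∑ i, (pd f i x) ^ 2) :=
  weighted_poincare_on_torus_general a f M hanonneg haint haL2 hane hf hM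
end
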